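/- Let B be a reduced abelian p-group, S a finite subgroup of B, and β an ordinal. Let F : (S ∩ B_β ∩ p^{-1}B_{β+2})/(S ∩ B_{β+1}) → P_β(B)/P_{β+1}(B) be the map induced by sending x ∈ S ∩ B_β with px ∈ B_{β+2} to the coset of x − y, where y ∈ B_{β+1} is any element with py = px. Then the following are equivalent: (1) the range of F is not all of P_β(B)/P_{β+1}(B); (2) there exists an element w ∈ P_β(B) of height exactly β which is proper with respect to S. -/

import Mathlib

open Ordinal

/-- Scalar multiplication by `p` as an additive group homomorphism. -/
def pHom (p : ℕ) (G : Type*) [AddCommGroup G] : G →+ G :=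
  AddMonoidHom.mk' (fun x => p • x) (fun a b => smul_add p a b)

@[simp] lemma pHom_apply (p : ℕ) {G : Type*} [AddCommGroup G] (x : G) :
    pHom p G x = p • x := rfl

/-- The Ulm subgroups `G_β`: `G_0 = G`, `G_{β+1} = pG_β`, and intersections at limits. -/
noncomputable def ulmSub (p : ℕ) (G : Type*) [AddCommGroup G] (β : Ordinal.{0}) :
    AddSubgroup G :=
  Ordinal.limitRecOn β ⊤ (fun _ H => AddSubgroup.map (pHom p G) H)
    (fun o _ ih => ⨅ (γ : Ordinal.{0}) (h : γ < o), ih γ h)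

lemma ulmSub_succ (p : ℕ) (G : Type*) [AddCommGroup G] (β : Ordinal.{0}) :
    ulmSub p G (β + 1) = AddSubgroup.map (pHom p G) (ulmSub p G β) := by
  unfold ulmSub
  rw [Ordinal.add_one_eq_succ, Ordinal.limitRecOn_succ]

lemma ulmSub_succ_le (p : ℕ) (G : Type*) [AddCommGroup G] (β : Ordinal.{0}) :
    ulmSub p G (β + 1) ≤ ulmSub p G β := by
  rw [ulmSub_succ]
  rintro x ⟨y, hy, rfl⟩
  simpa using (ulmSub p G β).nsmul_mem hy p

/-- An abelian `p`-group: every element is killed by some power of `p`. -/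
def IsAbelianPGroup (p : ℕ) (G : Type*) [AddCommGroup G] : Prop :=
  ∀ x : G, ∃ n : ℕ, p ^ n • x = 0

/-- The length `λ(G)`: the least ordinal `β` with `G_β = G_{β+1}`. -/
noncomputable def ulmLength (p : ℕ) (G : Type*) [AddCommGroup G] : Ordinal.{0} :=
  sInf {β : Ordinal.{0} | ulmSub p G β = ulmSub p G (β + 1)}

/-- `G` is reduced if `G_{λ(G)} = {0}`. -/
def IsReducedPGroup (p : ℕ) (G : Type*) [AddCommGroup G] : Prop :=
  ulmSub p G (ulmLength p G) = ⊥

/-- `P_β(G) = {x ∈ G_β : px = 0}`. -/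
noncomputable def ulmP (p : ℕ) (G : Type*) [AddCommGroup G] (β : Ordinal.{0}) : AddSubgroup G :=
  (pHom p G).ker ⊓ ulmSub p G β

/-- The quotient `P_β(G)/P_{β+1}(G)` (as a quotient of `P_β(G)` by the subgroup
corresponding to `P_{β+1}(G)`). -/
noncomputable def ulmQuot (p : ℕ) (G : Type*) [AddCommGroup G] (β : Ordinal.{0}) :=
  (ulmP p G β) ⧸ ((ulmP p G (β + 1)).addSubgroupOf (ulmP p G β))

noncomputable instance (p : ℕ) (G : Type*) [AddCommGroup G] (β : Ordinal.{0}) :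
    AddCommGroup (ulmQuot p G β) :=
  inferInstanceAs (AddCommGroup ((ulmP p G β) ⧸ ((ulmP p G (β + 1)).addSubgroupOf (ulmP p G β))))

noncomputable instance (p : ℕ) (G : Type*) [AddCommGroup G] (β : Ordinal.{0}) :
    Module (ZMod p) (ulmQuot p G β) :=
  QuotientAddGroup.zmodModule (by
    intro x
    simp only [AddSubgroup.mem_addSubgroupOf]
    have hx : ((p • x : ulmP p G β) : G) = 0 := by
      have := (AddSubgroup.mem_inf.mp x.2).1
      simp only [AddMonoidHom.mem_ker, pHom_apply] at this
      simpa using this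
    rw [hx]
    exact (ulmP p G (β + 1)).zero_mem)

/-- The Ulm invariant `u_β(G)`: the dimension of `P_β(G)/P_{β+1}(G)` over `ℤ/pℤ`. -/
noncomputable def ulmInvariant (p : ℕ) (G : Type*) [AddCommGroup G] (β : Ordinal.{0}) :
    Cardinal :=
  Module.rank (ZMod p) (ulmQuot p G β)

open Classical in
/-- The height of `x`: the unique ordinal `β` with `x ∈ G_β \ G_{β+1}` if it exists, and `∞`
(= `⊤`) otherwise. -/
noncomputable def height (p : ℕ) {G : Type*} [AddCommGroup G] (x : G) : WithTop Ordinal.{0} :=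
  if ∃ β : Ordinal.{0}, x ∈ ulmSub p G β ∧ x ∉ ulmSub p G (β + 1) then
    ((sInf {β : Ordinal.{0} | x ∈ ulmSub p G β ∧ x ∉ ulmSub p G (β + 1)} : Ordinal.{0}) :
      WithTop Ordinal.{0})
  else ⊤

/-- `d` is proper with respect to `S` if `h(d) ≥ h(d+s)` for every `s ∈ S`. -/
def ProperWRT (p : ℕ) {G : Type*} [AddCommGroup G] (S : AddSubgroup G) (d : G) : Prop :=
  ∀ s ∈ S, height p (d + s) ≤ height p d

/-- The subgroup `S ∩ B_β ∩ p⁻¹B_{β+2}`, where `p⁻¹B_{β+2} = {x : px ∈ B_{β+2}}`. -/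
noncomputable def kapSub (p : ℕ) {B : Type*} [AddCommGroup B] (S : AddSubgroup B)
    (β : Ordinal.{0}) : AddSubgroup B :=
  S ⊓ ulmSub p B β ⊓ (ulmSub p B (β + 2)).comap (pHom p B)

/-- The quotient `(S ∩ B_β ∩ p⁻¹B_{β+2}) / (S ∩ B_{β+1})`. -/
noncomputable def kapQuot (p : ℕ) {B : Type*} [AddCommGroup B] (S : AddSubgroup B)
    (β : Ordinal.{0}) :=
  kapSub p S β ⧸ ((S ⊓ ulmSub p B (β + 1)).addSubgroupOf (kapSub p S β))

noncomputable instance (p : ℕ) {B : Type*} [AddCommGroup B] (S : AddSubgroup B)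
    (β : Ordinal.{0}) : AddCommGroup (kapQuot p S β) :=
  inferInstanceAs
    (AddCommGroup (kapSub p S β ⧸ ((S ⊓ ulmSub p B (β + 1)).addSubgroupOf (kapSub p S β))))

noncomputable instance (p : ℕ) {B : Type*} [AddCommGroup B] (S : AddSubgroup B)
    (β : Ordinal.{0}) : Module (ZMod p) (kapQuot p S β) :=
  QuotientAddGroup.zmodModule (by
    intro x
    have hx := x.2
    simp only [kapSub, AddSubgroup.mem_inf, AddSubgroup.mem_comap, pHom_apply] at hx
    simp only [AddSubgroup.mem_addSubgroupOf, AddSubgroup.mem_inf]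
    have hc : ((p • x : kapSub p S β) : B) = p • (x : B) := rfl
    rw [hc]
    refine ⟨S.nsmul_mem hx.1.1 p, ?_⟩
    have h2 : (β + 2 : Ordinal.{0}) = (β + 1) + 1 := by
      rw [add_assoc]; norm_num
    exact ulmSub_succ_le p B (β + 1) (by rw [← h2]; exact hx.2))

/-!
An element `w` of height exactly `β` is proper with respect to `S` precisely when no translate
`w + s` (`s ∈ S`) lies in `B_{β+1}`. On the other hand, the class of `z ∈ P_β(B)` lies in the range
of `F` precisely when some translate `z + s` lies in `B_{β+1}`: from `x ∈ S` with `F [x] = [z]` and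
`px = py`, `y ∈ B_{β+1}`, take `s = -x`; from `z + s ∈ B_{β+1}` take `x = -s`, `y = -(z + s)`,
using `pz = 0` and `B_{β+2} = pB_{β+1}`. So both conditions say that some `z ∈ P_β(B)` has all
translates `z + s` outside `B_{β+1}` (taking `s = 0` forces its height to be `β`).
-/

section Height

variable {p : ℕ} {G : Type*} [AddCommGroup G]

lemma ulmSub_zero : ulmSub p G 0 = ⊤ := by
  rw [ulmSub, Ordinal.limitRecOn_zero]

lemma ulmSub_limit {o : Ordinal.{0}} (ho : Order.IsSuccLimit o) :
    ulmSub p G o = ⨅ (γ : Ordinal.{0}) (_ : γ < o), ulmSub p G γ := by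
  rw [ulmSub, Ordinal.limitRecOn_limit _ _ _ _ ho]
  rfl

lemma ulmSub_add_two (β : Ordinal.{0}) :
    ulmSub p G (β + 2) = AddSubgroup.map (pHom p G) (ulmSub p G (β + 1)) := by
  rw [← ulmSub_succ, add_assoc, one_add_one_eq_two]

lemma ulmSub_antitone : Antitone (ulmSub p G) := by
  intro γ δ hγδ
  induction δ using Ordinal.limitRecOn with
  | zero => rw [nonpos_iff_eq_zero.mp hγδ]
  | add_one o ih =>
    rcases hγδ.eq_or_lt with rfl | hlt
    · exact le_rfl
    · exact (ulmSub_succ_le p G o).trans (ih (Order.lt_add_one_iff.mp hlt))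
  | limit o ho _ =>
    rcases hγδ.eq_or_lt with rfl | hlt
    · exact le_rfl
    · rw [ulmSub_limit ho]
      exact iInf₂_le γ hlt

lemma mem_ulmSub_of_forall_mem_succ {x : G}
    (h : ∀ β, x ∈ ulmSub p G β → x ∈ ulmSub p G (β + 1)) (δ : Ordinal.{0}) :
    x ∈ ulmSub p G δ := by
  induction δ using Ordinal.limitRecOn with
  | zero => simp [ulmSub_zero]
  | add_one o ih => exact h o ih
  | limit o ho ih =>
    rw [ulmSub_limit ho]
    exact AddSubgroup.mem_iInf.mpr fun γ => AddSubgroup.mem_iInf.mpr (ih γ)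

lemma coe_le_height_iff {x : G} {γ : Ordinal.{0}} :
    (γ : WithTop Ordinal.{0}) ≤ height p x ↔ x ∈ ulmSub p G γ := by
  classical
  rw [height]
  split_ifs with hex
  · obtain ⟨hmem, hnot⟩ := csInf_mem (Set.nonempty_def.mpr hex)
    rw [WithTop.coe_le_coe]
    refine ⟨fun h => ulmSub_antitone h hmem, fun hx => ?_⟩
    by_contra! hlt
    exact hnot (ulmSub_antitone (Order.add_one_le_of_lt hlt) hx)
  · simp only [not_exists, not_and, not_not] at hex
    exact iff_of_true le_top (mem_ulmSub_of_forall_mem_succ hex γ)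

lemma height_le_coe_iff {x : G} {β : Ordinal.{0}} :
    height p x ≤ (β : WithTop Ordinal.{0}) ↔ x ∉ ulmSub p G (β + 1) := by
  rw [← coe_le_height_iff, not_le, ← Order.succ_eq_add_one, ← WithTop.succ_coe,
    Order.lt_succ_iff_of_not_isMax (WithTop.coe_lt_top β).not_isMax]

lemma height_eq_coe_iff {x : G} {β : Ordinal.{0}} :
    height p x = (β : WithTop Ordinal.{0}) ↔ x ∈ ulmSub p G β ∧ x ∉ ulmSub p G (β + 1) := by
  rw [← coe_le_height_iff, ← height_le_coe_iff, and_comm]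
  exact le_antisymm_iff

lemma properWRT_iff_forall_add_not_mem {S : AddSubgroup G} {w : G} {β : Ordinal.{0}}
    (hw : height p w = β) :
    ProperWRT p S w ↔ ∀ s ∈ S, w + s ∉ ulmSub p G (β + 1) := by
  simp only [ProperWRT, hw, height_le_coe_iff]

end Height

section KaplanskyMap

variable {p : ℕ} {B : Type*} [AddCommGroup B]

lemma mem_ulmP_iff {x : B} {β : Ordinal.{0}} :
    x ∈ ulmP p B β ↔ p • x = 0 ∧ x ∈ ulmSub p B β := by
  simp [ulmP]

lemma exists_smul_eq_of_mem_kapSub {S : AddSubgroup B} {β : Ordinal.{0}} {x : B}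
    (hx : x ∈ kapSub p S β) : ∃ y ∈ ulmSub p B (β + 1), p • y = p • x := by
  have hpx : pHom p B x ∈ ulmSub p B (β + 2) := hx.2
  rwa [ulmSub_add_two] at hpx

lemma sub_mem_ulmP {x y : B} {β : Ordinal.{0}} (hx : x ∈ ulmSub p B β)
    (hy : y ∈ ulmSub p B (β + 1)) (hpy : p • y = p • x) : x - y ∈ ulmP p B β :=
  mem_ulmP_iff.mpr ⟨by rw [smul_sub, hpy, _root_.sub_self], sub_mem hx (ulmSub_succ_le p B β hy)⟩

lemma exists_apply_eq_mk_iff {S : AddSubgroup B} {β : Ordinal.{0}}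
    (F : kapQuot p S β →ₗ[ZMod p] ulmQuot p B β)
    (hF : ∀ (x : B) (hx : x ∈ kapSub p S β) (y : B), y ∈ ulmSub p B (β + 1) →
      p • y = p • x → ∀ hxy : x - y ∈ ulmP p B β,
      F (QuotientAddGroup.mk (⟨x, hx⟩ : kapSub p S β)) =
        QuotientAddGroup.mk (⟨x - y, hxy⟩ : ulmP p B β))
    {z : B} (hz : z ∈ ulmP p B β) :
    (∃ c, F c = QuotientAddGroup.mk (⟨z, hz⟩ : ulmP p B β)) ↔
      ∃ s ∈ S, z + s ∈ ulmSub p B (β + 1) := by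
  obtain ⟨hpz, hzβ⟩ := mem_ulmP_iff.mp hz
  constructor
  · rintro ⟨c, hc⟩
    obtain ⟨⟨x, hx⟩, rfl⟩ := QuotientAddGroup.mk_surjective c
    obtain ⟨y, hy, hpy⟩ := exists_smul_eq_of_mem_kapSub hx
    rw [hF x hx y hy hpy (sub_mem_ulmP hx.1.2 hy hpy)] at hc
    have hzxy : -(x - y) + z ∈ ulmSub p B (β + 1) :=
      (mem_ulmP_iff.mp (AddSubgroup.mem_addSubgroupOf.mp (QuotientAddGroup.eq.mp hc))).2
    refine ⟨-x, neg_mem hx.1.1, ?_⟩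
    convert sub_mem hzxy hy using 1
    abel
  · rintro ⟨s, hs, hzs⟩
    have hps : p • -s = p • -(z + s) := by rw [smul_neg, smul_neg, smul_add, hpz, zero_add]
    have hxy : -s - -(z + s) = z := by abel
    have hx : -s ∈ kapSub p S β := by
      simp only [kapSub, AddSubgroup.mem_inf, AddSubgroup.mem_comap, pHom_apply]
      refine ⟨⟨neg_mem hs, ?_⟩, ?_⟩
      · rw [show -s = z - (z + s) by abel]
        exact sub_mem hzβ (ulmSub_succ_le p B β hzs)
      · rw [hps, ulmSub_add_two]
        exact ⟨-(z + s), neg_mem hzs, rfl⟩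
    refine ⟨QuotientAddGroup.mk ⟨-s, hx⟩, ?_⟩
    rw [hF (-s) hx (-(z + s)) (neg_mem hzs) hps.symm (by rwa [hxy])]
    congr 2

end KaplanskyMap

theorem kaplansky_lemma13_general (p : ℕ) (B : Type) [AddCommGroup B]
    (S : AddSubgroup B) (β : Ordinal.{0})
    (F : kapQuot p S β →ₗ[ZMod p] ulmQuot p B β)
    (hF : ∀ (x : B) (hx : x ∈ kapSub p S β) (y : B), y ∈ ulmSub p B (β + 1) →
      p • y = p • x → ∀ hxy : x - y ∈ ulmP p B β,
      F (QuotientAddGroup.mk (⟨x, hx⟩ : kapSub p S β)) =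
        QuotientAddGroup.mk (⟨x - y, hxy⟩ : ulmP p B β)) :
    ¬ Function.Surjective F ↔
      ∃ w ∈ ulmP p B β, (w ∈ ulmSub p B β ∧ w ∉ ulmSub p B (β + 1)) ∧ ProperWRT p S w := by
  simp only [Function.Surjective, not_forall]
  constructor
  · rintro ⟨c, hc⟩
    obtain ⟨⟨z, hz⟩, rfl⟩ := QuotientAddGroup.mk_surjective c
    have hzS : ∀ s ∈ S, z + s ∉ ulmSub p B (β + 1) := by
      simpa using (exists_apply_eq_mk_iff F hF hz).not.mp hc
    have hz1 : z ∉ ulmSub p B (β + 1) := by simpa using hzS 0 S.zero_mem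
    have hzβ : z ∈ ulmSub p B β := (mem_ulmP_iff.mp hz).2
    exact ⟨z, hz, ⟨hzβ, hz1⟩,
      (properWRT_iff_forall_add_not_mem (height_eq_coe_iff.mpr ⟨hzβ, hz1⟩)).mpr hzS⟩
  · rintro ⟨w, hw, hwβ, hprop⟩
    refine ⟨QuotientAddGroup.mk ⟨w, hw⟩, ?_⟩
    rw [exists_apply_eq_mk_iff F hF hw]
    simpa using (properWRT_iff_forall_add_not_mem (height_eq_coe_iff.mpr hwβ)).mp hprop

/-- Kaplansky's Lemma 13: the induced map `F` fails to be surjective onto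
`P_β(B)/P_{β+1}(B)` iff there is an element of `P_β(B)` of height exactly `β` which is
proper with respect to `S`. -/
theorem kaplansky_lemma13 (p : ℕ) (hp : p.Prime) (B : Type) [AddCommGroup B]
    (hB : IsAbelianPGroup p B) (hred : IsReducedPGroup p B)
    (S : AddSubgroup B) (hS : (S : Set B).Finite) (β : Ordinal.{0})
    (F : kapQuot p S β →ₗ[ZMod p] ulmQuot p B β)
    (hF : ∀ (x : B) (hx : x ∈ kapSub p S β) (y : B), y ∈ ulmSub p B (β + 1) →
      p • y = p • x → ∀ hxy : x - y ∈ ulmP p B β,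
      F (QuotientAddGroup.mk (⟨x, hx⟩ : kapSub p S β)) =
        QuotientAddGroup.mk (⟨x - y, hxy⟩ : ulmP p B β)) :
    ¬ Function.Surjective F ↔
      ∃ w ∈ ulmP p B β, (w ∈ ulmSub p B β ∧ w ∉ ulmSub p B (β + 1)) ∧ ProperWRT p S w :=
  kaplansky_lemma13_general p B S β F hF
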